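/- Let A = (a, (u+1)*a + d, (3u+1)*a + 3d, (7u+1)*a + 7d, (29u+1)*a + 29d), where d is a positive integer, gcd(a, d) = 1, u ≥ 3, and a ≥ 2. Let p be a positive divisor of a with p ≠ a. Then the Frobenius number of the quotient is F(⟨A⟩/p) = (a/p) * (⌊(a−p)/29⌋ + u*a + d + φ_3((a−p) mod 29)) − (u*a + d), where φ_3(0), φ_3(1), ..., φ_3(28) equal −1, 0, 1, 0, 1, 2, 1, 0, 1, 2, 1, 2, 3, 2, 1, 2, 3, 2, 3, 4, 3, 2, 3, 4, 3, 4, 5, 4, 3 respectively. -/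

import Mathlib

/-!
Write `b = u a + d`, so that the generators are `a` and `a + k b` for `k ∈ {1, 3, 7, 29}`. Hence
`N ∈ ⟨A⟩` iff `N = c a + Y b` where `Y` can be paid with at most `c` coins from `{1, 3, 7, 29}`;
for these coins the greedy count `g` is optimal, and `φ₃(r) = g r - 1`. With `a = p q`, the
number `F = (q - 1) b + (g (a - p) - 1) q` satisfies `p F = (g (a - p) - 1) a + (a - p) b`, which
is the only way of writing `p F` as `c a + Y b` with `Y < a` (as `a`, `b` are coprime and `b > a`),
and it has one coin too few. For `n > F`, pick `z < q` with `z b ≡ n (mod q)` and take `Y = p z`: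
since `g` drops by at most `3` per unit and `b ≥ 3 a`, lowering `z` from `q - 1` saves at least as
much as the extra coins cost.
-/

-- Greedy change-making count for the coins `{1, 3, 7, 29}`.
def minCoins (m : ℕ) : ℕ := m / 29 + m % 29 / 7 + m % 29 % 7 / 3 + m % 29 % 7 % 3

lemma minCoins_eq_div_add_minCoins_mod (m : ℕ) : minCoins m = m / 29 + minCoins (m % 29) := by
  unfold minCoins; omega

lemma minCoins_add_coin_le (m : ℕ) {k : ℕ} (hk : k ∈ [1, 3, 7, 29]) :
    minCoins (m + k) ≤ minCoins m + 1 := by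
  have hsmall : ∀ s < 29, minCoins (s + k) ≤ minCoins s + 1 := by
    simp only [List.mem_cons, List.not_mem_nil, or_false] at hk
    rcases hk with rfl | rfl | rfl | rfl <;> decide
  have hmk : (m + k) / 29 = m / 29 + (m % 29 + k) / 29 ∧ (m + k) % 29 = (m % 29 + k) % 29 := by
    omega
  have := hsmall (m % 29) (Nat.mod_lt _ (by norm_num))
  rw [minCoins_eq_div_add_minCoins_mod (m % 29 + k)] at this
  rw [minCoins_eq_div_add_minCoins_mod, minCoins_eq_div_add_minCoins_mod m, hmk.1, hmk.2]
  omega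

lemma minCoins_le_self (m : ℕ) : minCoins m ≤ m := by unfold minCoins; omega

lemma minCoins_pos {m : ℕ} (hm : 0 < m) : 0 < minCoins m := by unfold minCoins; omega

lemma minCoins_le_minCoins_succ_add (m : ℕ) : minCoins m ≤ minCoins (m + 1) + 3 := by
  unfold minCoins; omega

lemma minCoins_add_mul_le (m c : ℕ) {k : ℕ} (hk : k ∈ [1, 3, 7, 29]) :
    minCoins (m + k * c) ≤ minCoins m + c := by
  induction c with
  | zero => simp
  | succ c ih =>
    calc minCoins (m + k * (c + 1)) = minCoins (m + k * c + k) := by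
          rw [mul_add_one, add_assoc]
      _ ≤ minCoins (m + k * c) + 1 := minCoins_add_coin_le _ hk
      _ ≤ minCoins m + (c + 1) := by omega

lemma minCoins_le_num_coins (y v w t : ℕ) :
    minCoins (y + 3 * v + 7 * w + 29 * t) ≤ y + v + w + t := by
  have h1 := minCoins_add_mul_le 0 y (k := 1) (by simp)
  have h3 := minCoins_add_mul_le y v (k := 3) (by simp)
  have h7 := minCoins_add_mul_le (y + 3 * v) w (k := 7) (by simp)
  have h29 := minCoins_add_mul_le (y + 3 * v + 7 * w) t (k := 29) (by simp)
  simp only [zero_add, one_mul] at h1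
  have h0 : minCoins 0 = 0 := rfl
  omega

lemma minCoins_le_add_three_mul_sub {m n : ℕ} (hmn : m ≤ n) :
    minCoins m ≤ minCoins n + 3 * (n - m) := by
  induction n, hmn using Nat.le_induction with
  | base => simp
  | succ n hmn ih =>
    have := minCoins_le_minCoins_succ_add n
    omega

def IsCoinSum (a b N : ℕ) : Prop := ∃ c Y, N = c * a + Y * b ∧ minCoins Y ≤ c

lemma exists_gens_iff_isCoinSum (a b N : ℕ) :
    (∃ x y v w t : ℕ, N = x * a + y * (a + b) + v * (a + 3 * b) + w * (a + 7 * b) +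
      t * (a + 29 * b)) ↔ IsCoinSum a b N := by
  constructor
  · rintro ⟨x, y, v, w, t, rfl⟩
    refine ⟨x + y + v + w + t, y + 3 * v + 7 * w + 29 * t, by ring, ?_⟩
    have := minCoins_le_num_coins y v w t
    omega
  · rintro ⟨c, Y, rfl, hY⟩
    refine ⟨c - minCoins Y, Y % 29 % 7 % 3, Y % 29 % 7 / 3, Y % 29 / 7, Y / 29, ?_⟩
    have hsplit : Y % 29 % 7 % 3 + 3 * (Y % 29 % 7 / 3) + 7 * (Y % 29 / 7) + 29 * (Y / 29) = Y := by
      omega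
    have hcount : c - minCoins Y + (Y % 29 % 7 % 3 + Y % 29 % 7 / 3 + Y % 29 / 7 + Y / 29) = c := by
      unfold minCoins at hY ⊢; omega
    conv_lhs => rw [← hsplit, ← hcount]
    ring

lemma eq_and_eq_of_mul_add_mul_eq {a b c c' Y Y' : ℕ} (hab : Nat.Coprime a b)
    (h : c * a + Y * b = c' * a + Y' * b) (hY' : Y' < a) (hc' : c' < b) : c = c' ∧ Y = Y' := by
  have hmod : Y ≡ Y' [MOD a] := by
    refine Nat.ModEq.cancel_right_of_coprime hab ?_
    have := congrArg (· % a) h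
    simpa [Nat.ModEq, add_comm, Nat.add_mul_mod_self_right] using this
  have hYeq : Y = Y' + a * (Y / a) := by
    have := Nat.div_add_mod Y a
    rw [hmod, Nat.mod_eq_of_lt hY'] at this
    omega
  have hc : c + b * (Y / a) = c' := by
    have hapos : 0 < a := by omega
    rw [hYeq] at h
    apply Nat.eq_of_mul_eq_mul_left hapos
    linarith
  have hdiv : Y / a = 0 := by
    by_contra hne
    have : b ≤ b * (Y / a) := Nat.le_mul_of_pos_right b (Nat.pos_of_ne_zero hne)
    omega
  rw [hdiv, mul_zero, add_zero] at hc hYeq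
  exact ⟨hc, hYeq⟩

lemma not_isCoinSum {a b e Y : ℕ} (hab : Nat.Coprime a b) (hYa : Y < a) (hle : a ≤ b)
    (he : e < minCoins Y) : ¬ IsCoinSum a b (e * a + Y * b) := by
  rintro ⟨c, Y', h, hY'⟩
  have heb : e < b := by have := minCoins_le_self Y; omega
  obtain ⟨rfl, rfl⟩ := eq_and_eq_of_mul_add_mul_eq hab h.symm hYa heb
  omega

lemma exists_lt_mul_modEq {q b : ℕ} (hq : 0 < q) (hbq : Nat.Coprime b q) (n : ℕ) :
    ∃ z < q, z * b ≡ n [MOD q] := by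
  have : NeZero q := ⟨hq.ne'⟩
  have hunit : IsUnit (b : ZMod q) := (ZMod.isUnit_iff_coprime b q).mpr hbq
  refine ⟨((n : ZMod q) * (b : ZMod q)⁻¹).val, ZMod.val_lt _, ?_⟩
  rw [← ZMod.natCast_eq_natCast_iff, Nat.cast_mul, ZMod.natCast_val, ZMod.cast_id', id,
    mul_assoc, ZMod.inv_mul_of_unit _ hunit, mul_one]

lemma exists_eq_add_mul_of_modEq_of_lt_add {x n q : ℕ} (h : x ≡ n [MOD q]) (hlt : x < n + q) :
    ∃ j, n = x + q * j := by
  have hle : x ≤ n := by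
    by_contra! hnx
    have := Nat.eq_zero_of_dvd_of_lt ((Nat.modEq_iff_dvd' hnx.le).mp h.symm) (by omega)
    omega
  obtain ⟨j, hj⟩ := (Nat.modEq_iff_dvd' hle).mp h
  exact ⟨j, by omega⟩

lemma mul_add_minCoins_mul_le {p q b z r : ℕ} (hb : 3 * (p * q) ≤ b) (hzr : z ≤ r) :
    z * b + minCoins (p * z) * q ≤ r * b + minCoins (p * r) * q := by
  obtain ⟨w, rfl⟩ := Nat.exists_eq_add_of_le hzr
  have h := minCoins_le_add_three_mul_sub (Nat.mul_le_mul_left p hzr)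
  rw [mul_add, Nat.add_sub_cancel_left] at h
  calc z * b + minCoins (p * z) * q
      ≤ z * b + (minCoins (p * z + p * w) + 3 * (p * w)) * q := by gcongr
    _ = z * b + minCoins (p * z + p * w) * q + w * (3 * (p * q)) := by ring
    _ ≤ z * b + minCoins (p * z + p * w) * q + w * b := by gcongr
    _ = (z + w) * b + minCoins (p * (z + w)) * q := by rw [mul_add]; ring

lemma isCoinSum_mul_of_lt {p q b n : ℕ} (hq : 0 < q) (hb : 3 * (p * q) ≤ b)
    (hbq : Nat.Coprime b q) (hn : (q - 1) * b + minCoins (p * (q - 1)) * q < n + q) :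
    IsCoinSum (p * q) b (p * n) := by
  obtain ⟨z, hzq, hz⟩ := exists_lt_mul_modEq hq hbq n
  have hbound := mul_add_minCoins_mul_le hb (Nat.le_sub_one_of_lt hzq)
  have hmod : z * b + minCoins (p * z) * q ≡ n [MOD q] :=
    (Nat.add_mul_mod_self_right _ _ _).trans hz
  obtain ⟨j, hj⟩ := exists_eq_add_mul_of_modEq_of_lt_add hmod (by omega)
  exact ⟨minCoins (p * z) + j, p * z, by rw [hj]; ring, by omega⟩

lemma isGreatest_of_not_of_forall_lt {S : ℕ → Prop} {F : ℕ} (hF : ¬ S F)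
    (h : ∀ n, F < n → S n) : IsGreatest {z : ℤ | ¬ ∃ n : ℕ, (n : ℤ) = z ∧ S n} F := by
  refine ⟨fun ⟨n, hn, hS⟩ => hF (by rwa [← Nat.cast_inj.mp hn]), fun z hz => ?_⟩
  by_contra! hlt
  lift z to ℕ using by omega
  exact hz ⟨z, rfl, h z (by exact_mod_cast hlt)⟩

theorem isGreatest_not_isCoinSum_mul {p q b : ℕ} (hp : 0 < p) (hq : 2 ≤ q)
    (hb : 3 * (p * q) ≤ b) (hab : Nat.Coprime (p * q) b) :
    IsGreatest {z : ℤ | ¬ ∃ n : ℕ, (n : ℤ) = z ∧ IsCoinSum (p * q) b (p * n)}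
      ((q - 1) * b + (minCoins (p * (q - 1)) - 1) * q : ℕ) := by
  have hpos : 0 < minCoins (p * (q - 1)) := minCoins_pos (Nat.mul_pos hp (by omega))
  apply isGreatest_of_not_of_forall_lt
  · have hF : p * ((q - 1) * b + (minCoins (p * (q - 1)) - 1) * q) =
        (minCoins (p * (q - 1)) - 1) * (p * q) + p * (q - 1) * b := by ring
    rw [hF]
    exact not_isCoinSum hab (Nat.mul_lt_mul_of_pos_left (by omega) hp) (by omega) (by omega)
  · intro n hn
    refine isCoinSum_mul_of_lt (by omega) hb (hab.coprime_dvd_left (dvd_mul_left q p)).symm ?_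
    have : (minCoins (p * (q - 1)) - 1) * q + q = minCoins (p * (q - 1)) * q := by
      rw [← Nat.succ_mul, Nat.succ_eq_add_one, Nat.sub_add_cancel hpos]
    omega

lemma div_add_getD_eq_minCoins_sub_one (m : ℕ) :
    ((m / 29 : ℕ) : ℤ) + [(-1 : ℤ), 0, 1, 0, 1, 2, 1, 0, 1, 2, 1, 2, 3, 2, 1, 2, 3, 2, 3, 4, 3, 2,
      3, 4, 3, 4, 5, 4, 3].getD (m % 29) 0 = minCoins m - 1 := by
  have hsmall : ∀ s < 29, [(-1 : ℤ), 0, 1, 0, 1, 2, 1, 0, 1, 2, 1, 2, 3, 2, 1, 2, 3, 2, 3, 4, 3, 2,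
      3, 4, 3, 4, 5, 4, 3].getD s 0 = minCoins s - 1 := by decide
  rw [hsmall _ (Nat.mod_lt _ (by norm_num)), minCoins_eq_div_add_minCoins_mod m]
  push_cast
  ring

theorem stmt_12_general (a u d p : ℕ)
    (ha : 2 ≤ a) (hu : 3 ≤ u)
    (hgcd : Nat.gcd a d = 1)
    (hpa : p ∣ a) (hpne : p ≠ a) :
    IsGreatest {z : ℤ | ¬ ∃ n : ℕ, (n : ℤ) = z ∧ ∃ x y v w t : ℕ,
        p * n = x * a + y * ((u + 1) * a + d) + v * ((3 * u + 1) * a + 3 * d) +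
          w * ((7 * u + 1) * a + 7 * d) + t * ((29 * u + 1) * a + 29 * d)}
      (((a / p : ℕ) : ℤ) * ((((a - p) / 29 : ℕ) : ℤ) + u * a + d +
          [(-1 : ℤ), 0, 1, 0, 1, 2, 1, 0, 1, 2, 1, 2, 3, 2, 1, 2, 3, 2, 3, 4, 3, 2,
            3, 4, 3, 4, 5, 4, 3].getD ((a - p) % 29) 0)
        - ((u : ℤ) * a + d)) := by
  have hp : 0 < p := Nat.pos_of_dvd_of_pos hpa (by omega)
  obtain ⟨q, rfl⟩ := hpa
  have hq : 2 ≤ q := by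
    rcases q with _ | _ | q
    · omega
    · exact absurd (mul_one p).symm hpne
    · omega
  have hab : Nat.Coprime (p * q) (u * (p * q) + d) := by
    rw [add_comm]; exact (Nat.coprime_add_mul_right_right _ _ _).mpr hgcd
  have hb : 3 * (p * q) ≤ u * (p * q) + d := by nlinarith
  rw [Nat.mul_div_cancel_left q hp, ← Nat.mul_sub_one]
  convert isGreatest_not_isCoinSum_mul hp hq hb hab using 1
  · have hgen : ∀ k, (k * u + 1) * (p * q) + k * d = p * q + k * (u * (p * q) + d) := by
      intro k; ring
    rw [show (u + 1) * (p * q) + d = p * q + (u * (p * q) + d) by ring, hgen, hgen, hgen]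
    simp only [exists_gens_iff_isCoinSum]
  · have hpos : 1 ≤ minCoins (p * (q - 1)) := minCoins_pos (Nat.mul_pos hp (by omega))
    have := div_add_getD_eq_minCoins_sub_one (p * (q - 1))
    generalize p * (q - 1) = m at hpos this ⊢
    generalize m / 29 = s at this ⊢
    push_cast [Nat.cast_sub hpos, Nat.cast_sub (by omega : 1 ≤ q)]
    linear_combination (q : ℤ) * this

/-- For `A = (a, (u+1)a + d, (3u+1)a + 3d, (7u+1)a + 7d, (29u+1)a + 29d)`
with `d ≥ 1`, `gcd(a,d) = 1`, `u ≥ 3`, `a ≥ 2`, and `p` a positive divisor of `a`,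
`p ≠ a`: `F(⟨A⟩/p) = (a/p)·(⌊(a−p)/29⌋ + u·a + d + φ₃((a−p) mod 29)) − (u·a + d)`,
where `(φ₃(0),…,φ₃(28)) = (−1,0,1,0,1,2,1,0,1,2,1,2,3,2,1,2,3,2,3,4,3,2,3,4,3,4,5,4,3)`. -/
theorem stmt_12 (a u d p : ℕ)
    (ha : 2 ≤ a) (hd : 1 ≤ d) (hu : 3 ≤ u)
    (hgcd : Nat.gcd a d = 1)
    (hp : 0 < p) (hpa : p ∣ a) (hpne : p ≠ a) :
    IsGreatest {z : ℤ | ¬ ∃ n : ℕ, (n : ℤ) = z ∧ ∃ x y v w t : ℕ,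
        p * n = x * a + y * ((u + 1) * a + d) + v * ((3 * u + 1) * a + 3 * d) +
          w * ((7 * u + 1) * a + 7 * d) + t * ((29 * u + 1) * a + 29 * d)}
      (((a / p : ℕ) : ℤ) * ((((a - p) / 29 : ℕ) : ℤ) + u * a + d +
          [(-1 : ℤ), 0, 1, 0, 1, 2, 1, 0, 1, 2, 1, 2, 3, 2, 1, 2, 3, 2, 3, 4, 3, 2,
            3, 4, 3, 4, 5, 4, 3].getD ((a - p) % 29) 0)
        - ((u : ℤ) * a + d)) :=
  stmt_12_general a u d p ha hu hgcd hpa hpne
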